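/- Fix 0 < s ≤ 2 and let z = (x,y) be a point in the support of κ_s. If s ≤ 1, or if s > 1 and W_s^- ≤ y ≤ W_s^+ (in which case the support condition means y ∈ [0,1] and max(y−s, L_y^-(s)) ≤ x ≤ min(y+s, L_y^+(s))), then κ_s({(x',y') ∈ ℝ² : x < x' and y' < y}) = (y − x + s)²/(4s). If s > 1 and y ∉ [W_s^-, W_s^+] (in which case the support condition means x = 1−y), then κ_s({(x',y') ∈ ℝ² : x < x' and y' < y}) = y. (Claim 6.1) -/

import Mathlib

open MeasureTheory

/-- `L_x^-(s) = x + s - 2√(sx)`. -/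
noncomputable def Lminus (x s : ℝ) : ℝ := x + s - 2 * Real.sqrt (s * x)

/-- `L_x^+(s) = x - s + 2√(s(1-x))`. -/
noncomputable def Lplus (x s : ℝ) : ℝ := x - s + 2 * Real.sqrt (s * (1 - x))

/-- `W_s^- = (1 - √(2s - s²))/2`. -/
noncomputable def Wminus (s : ℝ) : ℝ := (1 - Real.sqrt (2 * s - s ^ 2)) / 2

/-- `W_s^+ = (1 + √(2s - s²))/2`. -/
noncomputable def Wplus (s : ℝ) : ℝ := (1 + Real.sqrt (2 * s - s ^ 2)) / 2

/-- The measure `w(x) δ_{y = g(x)} dx` on `ℝ²`, concentrated on the curve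
`{(x, g(x)) : x ∈ [0, 1]}`, assigning measure `∫_A w(x) dx` to `A × ℝ` for Borel
`A ⊆ [0, 1]`. -/
noncomputable def curveMeasure (g w : ℝ → ℝ) : Measure (ℝ × ℝ) :=
  Measure.map (fun x => (x, g x))
    ((volume.restrict (Set.Icc (0 : ℝ) 1)).withDensity fun x => ENNReal.ofReal (w x))

open Classical in
/-- The limiting configuration measure `κ_s` of Theorem 1.2. -/
noncomputable def kappa (s : ℝ) : Measure (ℝ × ℝ) :=
  ((volume : Measure (ℝ × ℝ)).withDensity fun p =>
      ENNReal.ofReal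
        (if Lminus p.1 s < p.2 ∧ p.2 < Lplus p.1 s ∧ p.1 - s < p.2 ∧ p.2 < p.1 + s
         then 1 / (2 * s) else 0))
  + curveMeasure (fun x => 1 - x)
      (fun x => if 1 < s ∧ ¬(Wminus s < x ∧ x < Wplus s) then 1 else 0)
  + curveMeasure (fun x => Lminus x s)
      (fun x =>
        ((if s ≤ 1 ∧ x < s then 1 else 0)
          + (if 1 < s ∧ Wminus s < x ∧ x < Wplus s then 1 else 0))
        * (1 - Real.sqrt (x / s)))
  + curveMeasure (fun x => Lplus x s)
      (fun x =>
        ((if s ≤ 1 ∧ 1 - s < x then 1 else 0)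
          + (if 1 < s ∧ Wminus s < x ∧ x < Wplus s then 1 else 0))
        * (1 - Real.sqrt ((1 - x) / s)))

/-!
Disintegrate `κ_s` along the first coordinate: `κ_s (Ioi x ×ˢ Iio y) = ∫_{t > x} m(t, y) dt`,
where `m(t, y)` (`columnMass`) is the mass that `κ_s` puts below height `y` on the vertical line
through `t`. On a column where the band `max(L_t^-, t - s) < y' < min(L_t^+, t + s)` is nonempty,
`κ_s` is the uniform law on `(t - s, t + s)` with the parts outside the band collapsed onto its
ends (the atom weights `1 - √(t/s)` and `1 - √((1-t)/s)` are exactly those masses), so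
`m(t, y) = (y + s - t)/(2s)` for `y` in the band and `m(t, y) = 1` above it. On the other columns
(`s > 1`, `t ∉ (W_s^-, W_s^+)`) the unit mass sits at height `1 - t`.

For `t, y ≤ 1` with `|t - y| ≤ s` one has `L_t^- < y ↔ L_y^- < t` and `L_t^+ < y ↔ L_y^+ < t`.
Hence, for `(x, y)` in the support, `y` lies in the band of every column
`t ∈ (x, min(y + s, L_y^+))`; beyond that, the column lies entirely below `y` for `t < 1` if
`y + s ≥ 1`, and entirely above `y` if `y + s < 1`. Integrating, with
`1 - L_y^+ = (y + s - L_y^+)²/(4s)`, gives the claim. In the case `x = 1 - y` every column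
`t ∈ (1 - y, 1)` lies entirely below `y`.
-/

open Set

/-! ### The curves `L^±` and the points `W^±` -/

lemma Lplus_eq_one_sub_Lminus (t s : ℝ) : Lplus t s = 1 - Lminus (1 - t) s := by
  simp only [Lplus, Lminus]; ring

lemma Lminus_nonneg {s t : ℝ} (hs : 0 ≤ s) (ht : 0 ≤ t) : 0 ≤ Lminus t s := by
  have := Real.sq_sqrt (mul_nonneg hs ht)
  unfold Lminus
  nlinarith [sq_nonneg (Real.sqrt (s * t) - s), sq_nonneg (t - s)]

lemma Lplus_le_one {s t : ℝ} (hs : 0 ≤ s) (ht : t ≤ 1) : Lplus t s ≤ 1 := by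
  rw [Lplus_eq_one_sub_Lminus]
  linarith [Lminus_nonneg hs (sub_nonneg.2 ht)]

lemma Lminus_le_iff {s a b : ℝ} (hs : 0 ≤ s) (ha : 0 ≤ a) (h : b ≤ a + s) :
    Lminus a s ≤ b ↔ ((a + s - b) / 2) ^ 2 ≤ s * a := by
  rw [← Real.le_sqrt (by linarith) (mul_nonneg hs ha), Lminus]
  constructor <;> intro <;> linarith

lemma Lminus_lt_iff {s a b : ℝ} (h : b ≤ a + s) :
    Lminus a s < b ↔ ((a + s - b) / 2) ^ 2 < s * a := by
  rw [← Real.lt_sqrt (by linarith), Lminus]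
  constructor <;> intro <;> linarith

/-- Both sides say `a² + b² + s² - 2ab - 2as - 2bs ≤ 0`. -/
lemma Lminus_le_comm {s a b : ℝ} (ha : 0 ≤ a) (hb : 0 ≤ b) (hab : a - b ≤ s) (hba : b - a ≤ s) :
    Lminus a s ≤ b ↔ Lminus b s ≤ a := by
  have hs : 0 ≤ s := by linarith
  rw [Lminus_le_iff hs ha (by linarith), Lminus_le_iff hs hb (by linarith)]
  constructor <;> intro <;> linarith

lemma Lminus_lt_comm {s a b : ℝ} (hab : a - b ≤ s) (hba : b - a ≤ s) :
    Lminus a s < b ↔ Lminus b s < a := by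
  rw [Lminus_lt_iff (by linarith), Lminus_lt_iff (by linarith)]
  constructor <;> intro <;> linarith

lemma lt_Lplus_comm {s a b : ℝ} (hab : a - b ≤ s) (hba : b - a ≤ s) :
    a < Lplus b s ↔ b < Lplus a s := by
  rw [Lplus_eq_one_sub_Lminus, Lplus_eq_one_sub_Lminus, lt_sub_comm, lt_sub_comm (a := b)]
  exact Lminus_lt_comm (by linarith) (by linarith)

lemma Lplus_lt_comm {s a b : ℝ} (ha : a ≤ 1) (hb : b ≤ 1) (hab : a - b ≤ s) (hba : b - a ≤ s) :
    Lplus a s < b ↔ Lplus b s < a := by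
  rw [Lplus_eq_one_sub_Lminus, Lplus_eq_one_sub_Lminus, sub_lt_comm,
    sub_lt_comm (b := Lminus (1 - b) s), ← not_le, ← not_le]
  exact not_congr (Lminus_le_comm (by linarith) (by linarith) (by linarith) (by linarith))

lemma sqrt_mul_add_sqrt_mul_one_sub {s t : ℝ} (hs : 0 ≤ s) (ht : t ∈ Icc (0 : ℝ) 1) :
    Real.sqrt (s * t) + Real.sqrt (s * (1 - t))
      = Real.sqrt (s * (1 + 2 * Real.sqrt (t * (1 - t)))) := by
  have ht' : 0 ≤ 1 - t := sub_nonneg.2 ht.2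
  rw [Real.sqrt_mul hs t, Real.sqrt_mul hs (1 - t), Real.sqrt_mul hs, Real.sqrt_mul ht.1,
    ← mul_add]
  congr 1
  rw [eq_comm, Real.sqrt_eq_iff_eq_sq (by positivity) (by positivity)]
  nlinarith [Real.sq_sqrt ht.1, Real.sq_sqrt ht']

lemma Lplus_sub_Lminus {s t : ℝ} (hs : 0 ≤ s) (ht : t ∈ Icc (0 : ℝ) 1) :
    Lplus t s - Lminus t s = 2 * (Real.sqrt (s * (1 + 2 * Real.sqrt (t * (1 - t)))) - s) := by
  rw [← sqrt_mul_add_sqrt_mul_one_sub hs ht, Lplus, Lminus]; ring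

lemma Lminus_lt_Lplus_iff {s t : ℝ} (hs : 0 < s) (ht : t ∈ Icc (0 : ℝ) 1) :
    Lminus t s < Lplus t s ↔ s < 1 + 2 * Real.sqrt (t * (1 - t)) := by
  rw [← sub_pos, Lplus_sub_Lminus hs.le ht, mul_pos_iff_of_pos_left two_pos, sub_pos,
    Real.lt_sqrt hs.le, sq, mul_lt_mul_iff_right₀ hs]

lemma Lminus_le_Lplus_of_le {s t : ℝ} (hs : 0 < s) (ht : t ∈ Icc (0 : ℝ) 1)
    (h : s ≤ 1 + 2 * Real.sqrt (t * (1 - t))) : Lminus t s ≤ Lplus t s := by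
  rw [← sub_nonneg, Lplus_sub_Lminus hs.le ht]
  have : s ≤ Real.sqrt (s * (1 + 2 * Real.sqrt (t * (1 - t)))) := by
    rw [Real.le_sqrt hs.le (by positivity), sq]
    exact mul_le_mul_of_nonneg_left h hs.le
  linarith

lemma Wminus_add_Wplus (s : ℝ) : Wminus s + Wplus s = 1 := by
  unfold Wminus Wplus; ring

lemma sq_sqrt_two_mul_sub_sq {s : ℝ} (hs0 : 0 ≤ s) (hs2 : s ≤ 2) :
    Real.sqrt (2 * s - s ^ 2) ^ 2 = 2 * s - s ^ 2 :=
  Real.sq_sqrt (by nlinarith)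

lemma sqrt_two_mul_sub_sq_le_one (s : ℝ) : Real.sqrt (2 * s - s ^ 2) ≤ 1 :=
  Real.sqrt_le_one.2 (by nlinarith [sq_nonneg (s - 1)])

lemma Wplus_mem_Icc (s : ℝ) : Wplus s ∈ Icc (0 : ℝ) 1 := by
  have := sqrt_two_mul_sub_sq_le_one s
  have := Real.sqrt_nonneg (2 * s - s ^ 2)
  constructor <;> unfold Wplus <;> linarith

lemma Lplus_Wplus {s : ℝ} (hs1 : 1 ≤ s) (hs2 : s ≤ 2) : Lplus (Wplus s) s = Wminus s := by
  set r := Real.sqrt (2 * s - s ^ 2) with hr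
  have hr2 : r ^ 2 = 2 * s - s ^ 2 := sq_sqrt_two_mul_sub_sq (by linarith) hs2
  have hrs : r ≤ s := by nlinarith [Real.sqrt_nonneg (2 * s - s ^ 2)]
  have : s * (1 - Wplus s) = ((s - r) / 2) ^ 2 := by unfold Wplus; rw [← hr]; nlinarith
  rw [Lplus, this, Real.sqrt_sq (by linarith)]
  unfold Wplus Wminus; rw [← hr]; ring

lemma mem_Ioo_Wminus_Wplus_iff {s t : ℝ} (hs1 : 1 ≤ s) (hs2 : s ≤ 2) :
    t ∈ Ioo (Wminus s) (Wplus s) ↔ s < 1 + 2 * Real.sqrt (t * (1 - t)) := by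
  have hr2 := sq_sqrt_two_mul_sub_sq (by linarith) hs2
  have hr0 := Real.sqrt_nonneg (2 * s - s ^ 2)
  calc t ∈ Ioo (Wminus s) (Wplus s) ↔ |2 * t - 1| < Real.sqrt (2 * s - s ^ 2) := by
        rw [abs_lt, mem_Ioo, Wminus, Wplus]
        constructor <;> intro h <;> constructor <;> linarith [h.1, h.2]
    _ ↔ ((s - 1) / 2) ^ 2 < t * (1 - t) := by
        constructor
        · intro h
          nlinarith [sq_lt_sq' (abs_lt.1 h).1 (abs_lt.1 h).2]
        · intro h
          exact abs_lt_of_sq_lt_sq (by nlinarith) hr0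
    _ ↔ s < 1 + 2 * Real.sqrt (t * (1 - t)) := by
        rw [← Real.lt_sqrt (by linarith)]; constructor <;> intro <;> linarith

/-! ### Columns of `κ_s` -/

def HasBand (s t : ℝ) : Prop := s ≤ 1 ∨ t ∈ Ioo (Wminus s) (Wplus s)

lemma one_sub_mem_Ioo_Wminus_Wplus {s t : ℝ} :
    1 - t ∈ Ioo (Wminus s) (Wplus s) ↔ t ∈ Ioo (Wminus s) (Wplus s) := by
  have h := Wminus_add_Wplus s
  simp only [mem_Ioo]
  constructor <;> rintro ⟨h1, h2⟩ <;> constructor <;> linarith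

lemma hasBand_one_sub {s t : ℝ} : HasBand s (1 - t) ↔ HasBand s t := by
  rw [HasBand, HasBand, one_sub_mem_Ioo_Wminus_Wplus]

lemma HasBand.Lminus_le_Lplus {s t : ℝ} (hs : 0 < s) (hs2 : s ≤ 2) (ht : t ∈ Icc (0 : ℝ) 1)
    (h : HasBand s t) : Lminus t s ≤ Lplus t s := by
  apply Lminus_le_Lplus_of_le hs ht
  rcases le_or_gt s 1 with hs1 | hs1
  · linarith [Real.sqrt_nonneg (t * (1 - t))]
  · exact ((mem_Ioo_Wminus_Wplus_iff hs1.le hs2).1 (h.resolve_left hs1.not_ge)).le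

lemma hasBand_of_Lminus_lt_Lplus {s t : ℝ} (hs : 0 < s) (hs2 : s ≤ 2) (ht : t ∈ Icc (0 : ℝ) 1)
    (h : Lminus t s < Lplus t s) : HasBand s t := by
  rcases le_or_gt s 1 with hs1 | hs1
  · exact Or.inl hs1
  · exact Or.inr ((mem_Ioo_Wminus_Wplus_iff hs1.le hs2).2 ((Lminus_lt_Lplus_iff hs ht).1 h))

open Classical in
noncomputable def antidiagWeight (s t : ℝ) : ℝ :=
  if 1 < s ∧ ¬(Wminus s < t ∧ t < Wplus s) then 1 else 0

open Classical in
noncomputable def lowerWeight (s t : ℝ) : ℝ :=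
  ((if s ≤ 1 ∧ t < s then 1 else 0) + (if 1 < s ∧ Wminus s < t ∧ t < Wplus s then 1 else 0))
    * (1 - Real.sqrt (t / s))

open Classical in
noncomputable def upperWeight (s t : ℝ) : ℝ :=
  ((if s ≤ 1 ∧ 1 - s < t then 1 else 0) + (if 1 < s ∧ Wminus s < t ∧ t < Wplus s then 1 else 0))
    * (1 - Real.sqrt ((1 - t) / s))

lemma kappa_eq (s : ℝ) : kappa s = ((volume : Measure (ℝ × ℝ)).withDensity fun p =>
      ENNReal.ofReal
        (if Lminus p.1 s < p.2 ∧ p.2 < Lplus p.1 s ∧ p.1 - s < p.2 ∧ p.2 < p.1 + s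
         then 1 / (2 * s) else 0))
    + curveMeasure (fun t => 1 - t) (antidiagWeight s)
    + curveMeasure (Lminus · s) (lowerWeight s) + curveMeasure (Lplus · s) (upperWeight s) :=
  rfl

lemma upperWeight_eq_lowerWeight (s t : ℝ) : upperWeight s t = lowerWeight s (1 - t) := by
  have h : 1 - s < t ↔ 1 - t < s := by constructor <;> intro <;> linarith
  simp only [upperWeight, lowerWeight, h, ← mem_Ioo, one_sub_mem_Ioo_Wminus_Wplus]

lemma antidiagWeight_of_hasBand {s t : ℝ} (h : HasBand s t) : antidiagWeight s t = 0 := by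
  rw [antidiagWeight, if_neg]
  rintro ⟨hs1, hW⟩
  exact hW (h.resolve_left hs1.not_ge)

lemma antidiagWeight_of_not_hasBand {s t : ℝ} (h : ¬HasBand s t) : antidiagWeight s t = 1 := by
  simp only [HasBand, not_or, not_le, mem_Ioo] at h
  rw [antidiagWeight, if_pos h]

lemma lowerWeight_of_hasBand {s t : ℝ} (hs : 0 < s) (ht : t ∈ Icc (0 : ℝ) 1) (h : HasBand s t) :
    lowerWeight s t = max 0 (1 - Real.sqrt (t / s)) := by
  rcases le_or_gt s 1 with hs1 | hs1
  · have hW : ¬(1 < s ∧ Wminus s < t ∧ t < Wplus s) := fun h' => hs1.not_gt h'.1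
    rw [lowerWeight, if_neg hW, add_zero]
    by_cases hts : t < s
    · rw [if_pos ⟨hs1, hts⟩, one_mul, max_eq_right]
      linarith [Real.sqrt_le_one.2 ((div_le_one hs).2 hts.le)]
    · rw [if_neg (fun h' => hts h'.2), zero_mul, max_eq_left]
      linarith [Real.one_le_sqrt.2 ((one_le_div hs).2 (not_lt.1 hts))]
  · have hW := h.resolve_left hs1.not_ge
    have hs1' : ¬(s ≤ 1 ∧ t < s) := fun h' => hs1.not_ge h'.1
    rw [lowerWeight, if_neg hs1', if_pos ⟨hs1, hW⟩, zero_add, one_mul,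
      max_eq_right]
    linarith [Real.sqrt_le_one.2 ((div_le_one hs).2 (by linarith [ht.2] : t ≤ s))]

lemma lowerWeight_of_not_hasBand {s t : ℝ} (h : ¬HasBand s t) : lowerWeight s t = 0 := by
  simp only [HasBand, not_or, not_le, mem_Ioo] at h
  rw [lowerWeight, if_neg (fun h' => h.1.not_ge h'.1), if_neg (fun h' => h.2 h'.2), add_zero,
    zero_mul]

lemma upperWeight_of_hasBand {s t : ℝ} (hs : 0 < s) (ht : t ∈ Icc (0 : ℝ) 1) (h : HasBand s t) :
    upperWeight s t = max 0 (1 - Real.sqrt ((1 - t) / s)) := by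
  rw [upperWeight_eq_lowerWeight, lowerWeight_of_hasBand hs ⟨by linarith [ht.2], by linarith [ht.1]⟩
    (hasBand_one_sub.2 h)]

lemma upperWeight_of_not_hasBand {s t : ℝ} (h : ¬HasBand s t) : upperWeight s t = 0 := by
  rw [upperWeight_eq_lowerWeight, lowerWeight_of_not_hasBand (mt hasBand_one_sub.1 h)]

noncomputable def bandLower (s t : ℝ) : ℝ := max (Lminus t s) (t - s)

noncomputable def bandUpper (s t : ℝ) : ℝ := min (Lplus t s) (t + s)

lemma bandUpper_eq_one_sub_bandLower (s t : ℝ) : bandUpper s t = 1 - bandLower s (1 - t) := by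
  rw [bandUpper, bandLower, Lplus_eq_one_sub_Lminus, ← min_sub_sub_left]; ring_nf

lemma sqrt_mul_eq_mul_sqrt_div {s t : ℝ} (hs : 0 < s) :
    Real.sqrt (s * t) = s * Real.sqrt (t / s) := by
  rw [show s * t = s ^ 2 * (t / s) by field_simp, Real.sqrt_mul (sq_nonneg s),
    Real.sqrt_sq hs.le]

lemma bandLower_sub {s t : ℝ} (hs : 0 < s) :
    bandLower s t - (t - s) = 2 * s * max 0 (1 - Real.sqrt (t / s)) := by
  rw [bandLower, ← max_sub_sub_right, sub_self, mul_max_of_nonneg _ _ (by positivity), mul_zero,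
    max_comm, Lminus, sqrt_mul_eq_mul_sqrt_div hs]
  ring_nf

lemma sub_bandUpper {s t : ℝ} (hs : 0 < s) :
    t + s - bandUpper s t = 2 * s * max 0 (1 - Real.sqrt ((1 - t) / s)) := by
  rw [bandUpper_eq_one_sub_bandLower, ← bandLower_sub hs]; ring

lemma HasBand.bandLower_le_bandUpper {s t : ℝ} (hs : 0 < s) (hs2 : s ≤ 2)
    (ht : t ∈ Icc (0 : ℝ) 1) (h : HasBand s t) : bandLower s t ≤ bandUpper s t := by
  have hL := h.Lminus_le_Lplus hs hs2 ht
  have h1 := Real.sqrt_nonneg (s * t)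
  have h2 := Real.sqrt_nonneg (s * (1 - t))
  unfold bandLower bandUpper Lminus Lplus at *
  exact max_le (le_min hL (by linarith)) (le_min (by linarith) (by linarith))

noncomputable def columnMass (s y t : ℝ) : ℝ :=
  max 0 (min (bandUpper s t) y - bandLower s t) / (2 * s)
    + (Icc 0 1).indicator (fun t => (if 1 - t < y then antidiagWeight s t else 0)
        + (if Lminus t s < y then lowerWeight s t else 0)
        + (if Lplus t s < y then upperWeight s t else 0)) t

lemma ite_lowerWeight_eq {s y t : ℝ} (hs : 0 < s) (ht : t ∈ Icc (0 : ℝ) 1) (h : HasBand s t) :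
    (if Lminus t s < y then lowerWeight s t else 0)
      = if bandLower s t < y then (bandLower s t - (t - s)) / (2 * s) else 0 := by
  have hw : lowerWeight s t = (bandLower s t - (t - s)) / (2 * s) := by
    rw [lowerWeight_of_hasBand hs ht h, bandLower_sub hs]; field_simp
  by_cases hle : Lminus t s ≤ t - s
  · have hlo : bandLower s t = t - s := max_eq_right hle
    rw [hw, hlo, sub_self, zero_div, ite_self, ite_self]
  · rw [hw, bandLower, max_eq_left (not_le.1 hle).le]

lemma ite_upperWeight_eq {s y t : ℝ} (hs : 0 < s) (ht : t ∈ Icc (0 : ℝ) 1) (h : HasBand s t) :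
    (if Lplus t s < y then upperWeight s t else 0)
      = if bandUpper s t < y then (t + s - bandUpper s t) / (2 * s) else 0 := by
  have hw : upperWeight s t = (t + s - bandUpper s t) / (2 * s) := by
    rw [upperWeight_of_hasBand hs ht h, sub_bandUpper hs]; field_simp
  by_cases hle : t + s ≤ Lplus t s
  · have hhi : bandUpper s t = t + s := min_eq_right hle
    rw [hw, hhi, sub_self, zero_div, ite_self, ite_self]
  · rw [hw, bandUpper, min_eq_left (not_le.1 hle).le]

lemma columnMass_of_hasBand {s y t : ℝ} (hs : 0 < s) (ht : t ∈ Icc (0 : ℝ) 1) (h : HasBand s t) :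
    columnMass s y t
      = (max 0 (min (bandUpper s t) y - bandLower s t)
          + (if bandLower s t < y then bandLower s t - (t - s) else 0)
          + (if bandUpper s t < y then t + s - bandUpper s t else 0)) / (2 * s) := by
  rw [columnMass, indicator_of_mem ht, antidiagWeight_of_hasBand h, ite_self, zero_add,
    ite_lowerWeight_eq hs ht h, ite_upperWeight_eq hs ht h]
  split_ifs <;> ring

lemma columnMass_of_mem_band {s y t : ℝ} (hs : 0 < s) (ht : t ∈ Icc (0 : ℝ) 1) (h : HasBand s t)
    (hlo : bandLower s t < y) (hhi : y ≤ bandUpper s t) :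
    columnMass s y t = (y + s - t) / (2 * s) := by
  rw [columnMass_of_hasBand hs ht h, min_eq_right hhi, if_pos hlo, if_neg hhi.not_gt,
    max_eq_right (by linarith)]
  ring

lemma columnMass_of_bandUpper_lt {s y t : ℝ} (hs : 0 < s) (hs2 : s ≤ 2) (ht : t ∈ Icc (0 : ℝ) 1)
    (h : HasBand s t) (hhi : bandUpper s t < y) : columnMass s y t = 1 := by
  have hband := h.bandLower_le_bandUpper hs hs2 ht
  rw [columnMass_of_hasBand hs ht h, min_eq_left hhi.le, if_pos (by linarith), if_pos hhi,
    max_eq_right (by linarith)]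
  field_simp
  ring

lemma columnMass_of_le_bandLower {s y t : ℝ} (hs : 0 < s) (hs2 : s ≤ 2) (ht : t ∈ Icc (0 : ℝ) 1)
    (h : HasBand s t) (hlo : y ≤ bandLower s t) : columnMass s y t = 0 := by
  have hband := h.bandLower_le_bandUpper hs hs2 ht
  rw [columnMass_of_hasBand hs ht h, if_neg hlo.not_gt, if_neg (by linarith),
    max_eq_left (by linarith [min_le_right (bandUpper s t) y])]
  simp

lemma columnMass_of_not_hasBand {s y t : ℝ} (hs : 0 < s) (hs2 : s ≤ 2) (ht : t ∈ Icc (0 : ℝ) 1)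
    (h : ¬HasBand s t) : columnMass s y t = if 1 - t < y then 1 else 0 := by
  have hLL : Lplus t s ≤ Lminus t s := not_lt.1 (mt (hasBand_of_Lminus_lt_Lplus hs hs2 ht) h)
  have hempty : bandUpper s t ≤ bandLower s t :=
    (min_le_left _ _).trans (hLL.trans (le_max_left _ _))
  rw [columnMass, indicator_of_mem ht, antidiagWeight_of_not_hasBand h,
    lowerWeight_of_not_hasBand h, upperWeight_of_not_hasBand h,
    max_eq_left (by linarith [min_le_left (bandUpper s t) y])]
  simp

lemma columnMass_of_one_lt {s y t : ℝ} (hs : 0 < s) (ht : 1 < t) : columnMass s y t = 0 := by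
  have hL : Lplus t s = t - s := by
    rw [Lplus, Real.sqrt_eq_zero_of_nonpos (by nlinarith)]; ring
  have hempty : bandUpper s t ≤ bandLower s t :=
    (min_le_left _ _).trans (hL.le.trans (le_max_right _ _))
  rw [columnMass, indicator_of_notMem (fun h => ht.not_ge h.2),
    max_eq_left (by linarith [min_le_left (bandUpper s t) y])]
  simp

/-! ### Disintegration of `κ_s` -/

lemma withDensity_indicator_regionBetween_prod_Iio {f g : ℝ → ℝ} (hf : Measurable f)
    (hg : Measurable g) (c : ENNReal) {A : Set ℝ} (hA : MeasurableSet A) (y : ℝ) :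
    (volume.withDensity ((regionBetween f g univ).indicator fun _ => c)) (A ×ˢ Iio y)
      = ∫⁻ t in A, c * ENNReal.ofReal (min (g t) y - f t) := by
  have hR := measurableSet_regionBetween hf hg MeasurableSet.univ
  have hset : A ×ˢ Iio y ∩ regionBetween f g univ = regionBetween f (fun t => min (g t) y) A := by
    ext p
    simp [regionBetween, and_assoc, and_comm, and_left_comm]
  rw [withDensity_indicator hR, withDensity_const, Measure.smul_apply,
    Measure.restrict_apply (hA.prod measurableSet_Iio), hset, Measure.volume_eq_prod,
    volume_regionBetween_eq_lintegral' hf (hg.min measurable_const) hA, smul_eq_mul,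
    ← lintegral_const_mul c ((hg.min measurable_const).sub hf).ennreal_ofReal]
  rfl

lemma curveMeasure_prod {g : ℝ → ℝ} (hg : Measurable g) (w : ℝ → ℝ) {A B : Set ℝ}
    (hA : MeasurableSet A) (hB : MeasurableSet B) :
    curveMeasure g w (A ×ˢ B)
      = ∫⁻ t in A, (Icc 0 1 ∩ g ⁻¹' B).indicator (fun t => ENNReal.ofReal (w t)) t := by
  have hg' : Measurable fun t => (t, g t) := measurable_id.prodMk hg
  have hpre : (fun t => (t, g t)) ⁻¹' A ×ˢ B = A ∩ g ⁻¹' B := rfl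
  rw [curveMeasure, Measure.map_apply hg' (hA.prod hB), hpre, setLIntegral_indicator
    (measurableSet_Icc.inter (hg hB)), withDensity_apply _ (hA.inter (hg hB)),
    Measure.restrict_restrict (hA.inter (hg hB))]
  congr 2
  ext t; simp only [mem_inter_iff]; tauto

lemma measurable_antidiagWeight (s : ℝ) : Measurable (antidiagWeight s) :=
  Measurable.ite (measurableSet_setOfPred.2 (by fun_prop)) measurable_const measurable_const

lemma measurable_lowerWeight (s : ℝ) : Measurable (lowerWeight s) :=
  ((Measurable.ite (measurableSet_setOfPred.2 (by fun_prop)) measurable_const measurable_const).add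
    (Measurable.ite (measurableSet_setOfPred.2 (by fun_prop)) measurable_const
      measurable_const)).mul (by fun_prop)

lemma measurable_upperWeight (s : ℝ) : Measurable (upperWeight s) := by
  rw [show upperWeight s = lowerWeight s ∘ (1 - ·) from funext (upperWeight_eq_lowerWeight s)]
  exact (measurable_lowerWeight s).comp (by fun_prop)

lemma continuous_Lminus (s : ℝ) : Continuous (Lminus · s) := by unfold Lminus; fun_prop

lemma continuous_Lplus (s : ℝ) : Continuous (Lplus · s) := by unfold Lplus; fun_prop

lemma measurable_bandLower (s : ℝ) : Measurable (bandLower s) :=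
  ((continuous_Lminus s).max (by fun_prop)).measurable

lemma measurable_bandUpper (s : ℝ) : Measurable (bandUpper s) :=
  ((continuous_Lplus s).min (by fun_prop)).measurable

lemma lowerWeight_nonneg {s t : ℝ} (hs : 0 < s) (ht : t ∈ Icc (0 : ℝ) 1) :
    0 ≤ lowerWeight s t := by
  by_cases h : HasBand s t
  · rw [lowerWeight_of_hasBand hs ht h]; exact le_max_left _ _
  · rw [lowerWeight_of_not_hasBand h]

lemma upperWeight_nonneg {s t : ℝ} (hs : 0 < s) (ht : t ∈ Icc (0 : ℝ) 1) :
    0 ≤ upperWeight s t := by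
  rw [upperWeight_eq_lowerWeight]
  exact lowerWeight_nonneg hs ⟨sub_nonneg.2 ht.2, by linarith [ht.1]⟩

lemma antidiagWeight_nonneg (s t : ℝ) : 0 ≤ antidiagWeight s t := by
  unfold antidiagWeight; split_ifs <;> norm_num

lemma ofReal_columnMass {s : ℝ} (hs : 0 < s) (y t : ℝ) :
    ENNReal.ofReal (columnMass s y t)
      = ENNReal.ofReal (1 / (2 * s)) * ENNReal.ofReal (min (bandUpper s t) y - bandLower s t)
        + (Icc 0 1 ∩ (fun t => 1 - t) ⁻¹' Iio y).indicator
            (fun t => ENNReal.ofReal (antidiagWeight s t)) t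
        + (Icc 0 1 ∩ (Lminus · s) ⁻¹' Iio y).indicator
            (fun t => ENNReal.ofReal (lowerWeight s t)) t
        + (Icc 0 1 ∩ (Lplus · s) ⁻¹' Iio y).indicator
            (fun t => ENNReal.ofReal (upperWeight s t)) t := by
  have hband : ENNReal.ofReal (max 0 (min (bandUpper s t) y - bandLower s t) / (2 * s))
      = ENNReal.ofReal (1 / (2 * s)) * ENNReal.ofReal (min (bandUpper s t) y - bandLower s t) := by
    rw [← ENNReal.ofReal_mul (by positivity), one_div_mul_eq_div, ENNReal.ofReal_div_of_pos
      (by positivity), ENNReal.ofReal_div_of_pos (by positivity), ENNReal.ofReal_max,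
      ENNReal.ofReal_zero, max_eq_right zero_le]
  by_cases ht : t ∈ Icc (0 : ℝ) 1
  · have h1 := antidiagWeight_nonneg s t
    have h2 := lowerWeight_nonneg hs ht
    have h3 := upperWeight_nonneg hs ht
    simp only [columnMass, indicator, mem_inter_iff, mem_preimage, mem_Iio, ht, true_and, if_true]
    rw [ENNReal.ofReal_add (by positivity) (by split_ifs <;> positivity), hband,
      ENNReal.ofReal_add (by split_ifs <;> positivity) (by split_ifs <;> positivity),
      ENNReal.ofReal_add (by split_ifs <;> positivity) (by split_ifs <;> positivity)]
    simp only [apply_ite ENNReal.ofReal, ENNReal.ofReal_zero, add_assoc]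
  · simp [columnMass, ht, hband]

lemma kappa_Ioi_prod_Iio {s : ℝ} (hs : 0 < s) (x y : ℝ) :
    kappa s (Ioi x ×ˢ Iio y) = ∫⁻ t in Ioi x, ENNReal.ofReal (columnMass s y t) := by
  have hdensity : (fun p : ℝ × ℝ => ENNReal.ofReal
        (if Lminus p.1 s < p.2 ∧ p.2 < Lplus p.1 s ∧ p.1 - s < p.2 ∧ p.2 < p.1 + s
         then 1 / (2 * s) else 0))
      = (regionBetween (bandLower s) (bandUpper s) univ).indicator
          fun _ => ENNReal.ofReal (1 / (2 * s)) := by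
    ext p
    by_cases h : Lminus p.1 s < p.2 ∧ p.2 < Lplus p.1 s ∧ p.1 - s < p.2 ∧ p.2 < p.1 + s
    · rw [if_pos h, indicator_of_mem]
      exact ⟨mem_univ _, max_lt h.1 h.2.2.1, lt_min h.2.1 h.2.2.2⟩
    · rw [if_neg h, indicator_of_notMem, ENNReal.ofReal_zero]
      rintro ⟨-, h1, h2⟩
      exact h ⟨(max_lt_iff.1 h1).1, (lt_min_iff.1 h2).1, (max_lt_iff.1 h1).2, (lt_min_iff.1 h2).2⟩
  have hcurve : ∀ {g : ℝ → ℝ} (w : ℝ → ℝ), Measurable g → Measurable w →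
      Measurable ((Icc 0 1 ∩ g ⁻¹' Iio y).indicator fun t => ENNReal.ofReal (w t)) :=
    fun w hg hw => hw.ennreal_ofReal.indicator (measurableSet_Icc.inter (hg measurableSet_Iio))
  rw [kappa_eq, Measure.add_apply, Measure.add_apply, Measure.add_apply, hdensity,
    withDensity_indicator_regionBetween_prod_Iio
      (measurable_bandLower s) (measurable_bandUpper s) _ measurableSet_Ioi,
    curveMeasure_prod (by fun_prop) _ measurableSet_Ioi measurableSet_Iio,
    curveMeasure_prod (continuous_Lminus s).measurable _ measurableSet_Ioi measurableSet_Iio,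
    curveMeasure_prod (continuous_Lplus s).measurable _ measurableSet_Ioi measurableSet_Iio,
    ← lintegral_add_right _ (hcurve _ (by fun_prop) (measurable_antidiagWeight s)),
    ← lintegral_add_right _ (hcurve _ (continuous_Lminus s).measurable (measurable_lowerWeight s)),
    ← lintegral_add_right _ (hcurve _ (continuous_Lplus s).measurable (measurable_upperWeight s))]
  exact setLIntegral_congr_fun measurableSet_Ioi fun t _ => (ofReal_columnMass hs y t).symm

/-! ### Integration over `t > x` -/

lemma setLIntegral_Ioi_eq_Ioo {f : ℝ → ENNReal} {a b : ℝ} (hab : a ≤ b)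
    (hf : ∀ t, b < t → f t = 0) : ∫⁻ t in Ioi a, f t = ∫⁻ t in Ioo a b, f t := by
  rw [← Ioc_union_Ioi_eq_Ioi hab, lintegral_union measurableSet_Ioi Ioc_disjoint_Ioi_same,
    setLIntegral_congr_fun measurableSet_Ioi (fun t ht => hf t ht), lintegral_zero, add_zero,
    setLIntegral_congr Ioo_ae_eq_Ioc.symm]

lemma setLIntegral_Ioo_ofReal_sub_div {a b c d : ℝ} (hd : 0 < d) (hab : a ≤ b) (hbc : b ≤ c) :
    ∫⁻ t in Ioo a b, ENNReal.ofReal ((c - t) / d)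
      = ENNReal.ofReal (((c - a) ^ 2 - (c - b) ^ 2) / (2 * d)) := by
  have hcont : Continuous fun t => (c - t) / d := by fun_prop
  have hderiv : ∀ t, HasDerivAt (fun t => -(c - t) ^ 2 / (2 * d)) ((c - t) / d) t := by
    intro t
    refine ((((hasDerivAt_id t).const_sub c).pow 2).neg.div_const (2 * d)).congr_deriv ?_
    simp only [id]; field_simp; ring
  rw [← ofReal_integral_eq_lintegral_ofReal
      ((hcont.integrableOn_Icc).mono_set Ioo_subset_Icc_self)
      ((ae_restrict_mem measurableSet_Ioo).mono fun t ht => div_nonneg (by linarith [ht.2]) hd.le),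
    ← integral_Ioc_eq_integral_Ioo, ← intervalIntegral.integral_of_le hab,
    intervalIntegral.integral_eq_sub_of_hasDerivAt (fun t _ => hderiv t)
      (hcont.intervalIntegrable a b)]
  congr 1; ring

lemma add_le_Lplus {s y : ℝ} (hs : 0 < s) (h : y + s ≤ 1) : y + s ≤ Lplus y s := by
  have : s ≤ Real.sqrt (s * (1 - y)) := by
    rw [Real.le_sqrt hs.le (by nlinarith), sq]; nlinarith
  rw [Lplus]; linarith

lemma one_sub_Lplus {s y : ℝ} (hs : 0 < s) (hy : y ≤ 1) :
    1 - Lplus y s = (y + s - Lplus y s) ^ 2 / (4 * s) := by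
  have hr := Real.sq_sqrt (mul_nonneg hs.le (sub_nonneg.2 hy))
  rw [Lplus]
  field_simp
  linear_combination (-4 : ℝ) * hr

lemma columnMass_of_mem_Ioo {s x y t : ℝ} (hs : 0 < s) (hs2 : s ≤ 2) (hy0 : 0 ≤ y) (hy1 : y ≤ 1)
    (hx : max (y - s) (Lminus y s) ≤ x) (ht : t ∈ Ioo x (min (y + s) (Lplus y s))) :
    columnMass s y t = (y + s - t) / (2 * s) := by
  have hsx : y - s < t := (le_max_left _ _).trans hx |>.trans_lt ht.1
  have hLx : Lminus y s < t := (le_max_right _ _).trans hx |>.trans_lt ht.1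
  have hys : t < y + s := ht.2.trans_le (min_le_left _ _)
  have hLp : t < Lplus y s := ht.2.trans_le (min_le_right _ _)
  have ht01 : t ∈ Icc (0 : ℝ) 1 :=
    ⟨(Lminus_nonneg hs.le hy0).trans hLx.le, hLp.le.trans (Lplus_le_one hs.le hy1)⟩
  have hLmt : Lminus t s < y := (Lminus_lt_comm (by linarith) (by linarith)).2 hLx
  have hLpt : y < Lplus t s := (lt_Lplus_comm (by linarith) (by linarith)).2 hLp
  exact columnMass_of_mem_band hs ht01 (hasBand_of_Lminus_lt_Lplus hs hs2 ht01 (hLmt.trans hLpt))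
    (max_lt hLmt (by linarith)) (le_min hLpt.le (by linarith))

lemma columnMass_of_Lplus_lt {s y t : ℝ} (hs : 0 < s) (hs2 : s ≤ 2)
    (hcase : s ≤ 1 ∨ (1 < s ∧ Wminus s ≤ y ∧ y ≤ Wplus s)) (hy1 : y ≤ 1) (hys : 1 ≤ y + s)
    (ht0 : 0 ≤ t) (hLt : Lplus y s < t) (ht1 : t < 1) : columnMass s y t = 1 := by
  have ht01 : t ∈ Icc (0 : ℝ) 1 := ⟨ht0, ht1.le⟩
  have hLy : y - s ≤ Lplus y s := by
    have := Real.sqrt_nonneg (s * (1 - y)); rw [Lplus]; linarith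
  have hLpt : Lplus t s < y := (Lplus_lt_comm ht1.le hy1 (by linarith) (by linarith)).2 hLt
  by_cases h : HasBand s t
  · exact columnMass_of_bandUpper_lt hs hs2 ht01 h ((min_le_left _ _).trans_lt hLpt)
  rw [columnMass_of_not_hasBand hs hs2 ht01 h, if_pos]
  simp only [HasBand, not_or, not_le] at h
  obtain ⟨-, hWy, hyW⟩ := hcase.resolve_left h.1.not_ge
  have hW := Wminus_add_Wplus s
  have hWp := Lplus_Wplus h.1.le hs2
  have hW01 := Wplus_mem_Icc s
  have hWt : Wminus s < t := by
    rw [← hWp]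
    exact (Lplus_lt_comm ht1.le hW01.2 (by linarith [hW01.1]) (by linarith [hW01.2])).1
      (hLpt.trans_le hyW)
  -- at `t = W_s^+` the strict inequality `1 - t < y` comes from `W_s^- = L_t^+ < y`
  rcases (not_lt.1 fun h' => h.2 ⟨hWt, h'⟩).lt_or_eq with hWt' | rfl <;> linarith

lemma setLIntegral_columnMass_Ioi_min {s y : ℝ} (hs : 0 < s) (hs2 : s ≤ 2)
    (hcase : s ≤ 1 ∨ (1 < s ∧ Wminus s ≤ y ∧ y ≤ Wplus s)) (hy0 : 0 ≤ y) (hy1 : y ≤ 1)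
    (hX : 0 ≤ min (y + s) (Lplus y s)) :
    ∫⁻ t in Ioi (min (y + s) (Lplus y s)), ENNReal.ofReal (columnMass s y t)
      = ENNReal.ofReal ((y + s - min (y + s) (Lplus y s)) ^ 2 / (4 * s)) := by
  rcases le_or_gt 1 (y + s) with hys | hys
  · have hmin : min (y + s) (Lplus y s) = Lplus y s :=
      min_eq_right ((Lplus_le_one hs.le hy1).trans hys)
    rw [hmin] at hX ⊢
    rw [setLIntegral_Ioi_eq_Ioo (Lplus_le_one hs.le hy1)
        (fun t ht => by rw [columnMass_of_one_lt hs ht, ENNReal.ofReal_zero]),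
      setLIntegral_congr_fun measurableSet_Ioo (fun t ht => by
        rw [columnMass_of_Lplus_lt hs hs2 hcase hy1 hys (hX.trans ht.1.le) ht.1 ht.2,
          ENNReal.ofReal_one]),
      setLIntegral_const, Real.volume_Ioo, one_mul, one_sub_Lplus hs hy1]
  · have hmin : min (y + s) (Lplus y s) = y + s := min_eq_left (add_le_Lplus hs hys.le)
    rw [hmin, sub_self, zero_pow two_ne_zero, zero_div, ENNReal.ofReal_zero]
    refine (setLIntegral_congr_fun measurableSet_Ioi fun t ht => ?_).trans lintegral_zero
    rcases le_or_gt t 1 with ht1 | ht1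
    · rw [columnMass_of_le_bandLower hs hs2 ⟨by linarith [ht.out], ht1⟩ (Or.inl (by linarith))
        ((by linarith [ht.out] : y ≤ t - s).trans (le_max_right _ _)), ENNReal.ofReal_zero]
    · rw [columnMass_of_one_lt hs ht1, ENNReal.ofReal_zero]

lemma setLIntegral_columnMass_bulk {s x y : ℝ} (hs : 0 < s) (hs2 : s ≤ 2)
    (hcase : s ≤ 1 ∨ (1 < s ∧ Wminus s ≤ y ∧ y ≤ Wplus s)) (hy0 : 0 ≤ y) (hy1 : y ≤ 1)
    (hx1 : max (y - s) (Lminus y s) ≤ x) (hx2 : x ≤ min (y + s) (Lplus y s)) :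
    ∫⁻ t in Ioi x, ENNReal.ofReal (columnMass s y t)
      = ENNReal.ofReal ((y - x + s) ^ 2 / (4 * s)) := by
  have hx0 : 0 ≤ x := (Lminus_nonneg hs.le hy0).trans ((le_max_right _ _).trans hx1)
  have hXy : min (y + s) (Lplus y s) ≤ y + s := min_le_left _ _
  rw [← Ioc_union_Ioi_eq_Ioi hx2, lintegral_union measurableSet_Ioi Ioc_disjoint_Ioi_same,
    setLIntegral_congr Ioo_ae_eq_Ioc.symm,
    setLIntegral_congr_fun measurableSet_Ioo
      (fun t ht => by rw [columnMass_of_mem_Ioo hs hs2 hy0 hy1 hx1 ht]),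
    setLIntegral_Ioo_ofReal_sub_div (by positivity) hx2 hXy,
    setLIntegral_columnMass_Ioi_min hs hs2 hcase hy0 hy1 (hx0.trans hx2),
    ← ENNReal.ofReal_add (div_nonneg (by nlinarith) (by positivity)) (by positivity)]
  congr 1; ring

lemma columnMass_of_mem_Ioo_one_sub {s y t : ℝ} (hs1 : 1 < s) (hs2 : s ≤ 2)
    (hW : ¬(Wminus s ≤ y ∧ y ≤ Wplus s)) (hy1 : y ≤ 1) (ht : t ∈ Ioo (1 - y) 1) :
    columnMass s y t = 1 := by
  have hs : 0 < s := by linarith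
  have ht01 : t ∈ Icc (0 : ℝ) 1 := ⟨by linarith [ht.1], ht.2.le⟩
  by_cases h : HasBand s t
  · have hWt := h.resolve_left hs1.not_ge
    have hW' := Wminus_add_Wplus s
    have hW01 := Wplus_mem_Icc s
    have hyW : Wplus s < y := by
      by_contra hy
      have : y < Wminus s := not_le.1 fun h' => hW ⟨h', not_lt.1 hy⟩
      linarith [ht.1, hWt.2]
    have hLt : Lplus t s < Wplus s := by
      refine (Lplus_lt_comm ht.2.le hW01.2 (by linarith [ht01.2, hW01.1])
        (by linarith [ht01.1, hW01.2])).2 ?_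
      rw [Lplus_Wplus hs1.le hs2]; exact hWt.1
    exact columnMass_of_bandUpper_lt hs hs2 ht01 h ((min_le_left _ _).trans_lt (hLt.trans hyW))
  · rw [columnMass_of_not_hasBand hs hs2 ht01 h, if_pos (by linarith [ht.1])]

lemma setLIntegral_columnMass_antidiag {s y : ℝ} (hs1 : 1 < s) (hs2 : s ≤ 2)
    (hW : ¬(Wminus s ≤ y ∧ y ≤ Wplus s)) (hy0 : 0 ≤ y) (hy1 : y ≤ 1) :
    ∫⁻ t in Ioi (1 - y), ENNReal.ofReal (columnMass s y t) = ENNReal.ofReal y := by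
  rw [setLIntegral_Ioi_eq_Ioo (b := 1) (by linarith)
      (fun t ht => by rw [columnMass_of_one_lt (by linarith) ht, ENNReal.ofReal_zero]),
    setLIntegral_congr_fun measurableSet_Ioo (fun t ht => by
      rw [columnMass_of_mem_Ioo_one_sub hs1 hs2 hW hy1 ht, ENNReal.ofReal_one]),
    setLIntegral_const, Real.volume_Ioo, one_mul, sub_sub_cancel]

/-- Claim 6.1: for `z = (x, y)` in the support of `κ_s`, the `κ_s`-measure of
`{z' : z ↘ z'} = {(x', y') : x < x', y' < y}` equals `(y - x + s)²/(4s)` in the bulk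
case (`s ≤ 1`, or `s > 1` with `W_s^- ≤ y ≤ W_s^+`), and `y` in the case `s > 1`,
`y ∉ [W_s^-, W_s^+]` (where the support condition forces `x = 1 - y`). -/
theorem kappa_lower_right_measure (s : ℝ) (hs0 : 0 < s) (hs2 : s ≤ 2) (x y : ℝ) :
    ((s ≤ 1 ∨ (1 < s ∧ Wminus s ≤ y ∧ y ≤ Wplus s)) →
      0 ≤ y → y ≤ 1 →
      max (y - s) (Lminus y s) ≤ x → x ≤ min (y + s) (Lplus y s) →
      kappa s {p : ℝ × ℝ | x < p.1 ∧ p.2 < y}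
        = ENNReal.ofReal ((y - x + s) ^ 2 / (4 * s)))
    ∧ (1 < s → ¬(Wminus s ≤ y ∧ y ≤ Wplus s) → 0 ≤ y → y ≤ 1 → x = 1 - y →
      kappa s {p : ℝ × ℝ | x < p.1 ∧ p.2 < y} = ENNReal.ofReal y) := by
  have hS : {p : ℝ × ℝ | x < p.1 ∧ p.2 < y} = Ioi x ×ˢ Iio y := rfl
  rw [hS, kappa_Ioi_prod_Iio hs0]
  exact ⟨setLIntegral_columnMass_bulk hs0 hs2, fun hs1 hW hy0 hy1 hx =>
    hx ▸ setLIntegral_columnMass_antidiag hs1 hs2 hW hy0 hy1⟩
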